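/- arXiv:2010.06909 — 5 statements merged into one kernel-verified Lean document; each statement's English description precedes it below -/
import Mathlib

section
/- There exist real numbers a' and b' with a' < b' such that for every a < a' and every b > b' the following hold: (1) for all x, x' in S, if f(x) < f(x') then P(x,a,b) > P(x',a,b); (2) 0 < P(x,a,b) < 1 for every x in S; (3) the set S*(a,b) = {x in S : P(x,a,b) ≥ P(x',a,b) for all x' in S} is nonempty and is contained in the set S* = {x in S : f(x) ≤ f(x') for all x' in S} of global minimizers of f. -/
open MeasureTheory

/-- Expected objective value `f(x) = E[H(x)]`. -/
noncomputable def srF {S : Type*} {Ω : Type*} [MeasurableSpace Ω] (ℙ : Measure Ω)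
    (H : S → Ω → ℝ) (x : S) : ℝ :=
  ∫ ω, H x ω ∂ℙ

/-- Stochastic-ruler success probability
`P(x,a,b) = E[min(max((b − H(x))/(b − a), 0), 1)] = ℙ(H(x) ≤ θ)` for `θ ~ U[a,b]`. -/
noncomputable def srP {S : Type*} {Ω : Type*} [MeasurableSpace Ω] (ℙ : Measure Ω)
    (H : S → Ω → ℝ) (x : S) (a b : ℝ) : ℝ :=
  ∫ ω, min (max ((b - H x ω) / (b - a)) 0) 1 ∂ℙ

/-!
For `a < 0 < b`, clamping `(b - t) / (b - a)` to `[0, 1]` changes it only when `t ∉ [a, b]`,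
where `|t| ≥ min b (-a)`; the change is then at most `(t ^ 2 / b + t ^ 2 / -a) / (b - a)`.
Taking expectations, `(b - a) * P(x, a, b) = b - f(x) + o(1)` as `a → -∞` and `b → ∞`. So each
claim (the strict order reversal for a pair with `f x < f x'`, and `0 < P < 1`) holds
eventually along `atBot ×ˢ atTop`, and finitely many such claims hold simultaneously.
-/

open Filter Topology

lemma abs_mul_clamp_sub_le {a b t : ℝ} (ha : a < 0) (hb : 0 < b) :
    |(b - a) * min (max ((b - t) / (b - a)) 0) 1 - (b - t)| ≤ t ^ 2 / b + t ^ 2 / -a := by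
  have hba : 0 < b - a := by linarith
  have hb' : 0 ≤ t ^ 2 / b := by positivity
  have ha' : 0 ≤ t ^ 2 / -a := div_nonneg (sq_nonneg t) (by linarith)
  rcases le_or_gt t a with hta | hat
  · have h1 : 1 ≤ (b - t) / (b - a) := by rw [le_div_iff₀ hba]; linarith
    have : a - t ≤ t ^ 2 / -a := by rw [le_div_iff₀ (by linarith)]; nlinarith
    rw [max_eq_left (by linarith), min_eq_right h1, abs_le]
    constructor <;> linarith
  rcases le_or_gt b t with hbt | htb
  · have h0 : (b - t) / (b - a) ≤ 0 := div_nonpos_of_nonpos_of_nonneg (by linarith) hba.le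
    have : t - b ≤ t ^ 2 / b := by rw [le_div_iff₀ hb]; nlinarith
    rw [max_eq_right h0, min_eq_left zero_le_one, abs_le]
    constructor <;> linarith
  · have h0 : 0 ≤ (b - t) / (b - a) := div_nonneg (by linarith) hba.le
    have h1 : (b - t) / (b - a) ≤ 1 := by rw [div_le_one hba]; linarith
    rw [max_eq_left h0, min_eq_left h1, mul_div_cancel₀ _ hba.ne', sub_self, abs_zero]
    positivity

lemma eventually_pos_of_eventually_pos_mul_sub {g : ℝ × ℝ → ℝ}
    (h : ∀ᶠ p : ℝ × ℝ in atBot ×ˢ atTop, 0 < (p.2 - p.1) * g p) :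
    ∀ᶠ p : ℝ × ℝ in atBot ×ˢ atTop, 0 < g p := by
  filter_upwards [h, (eventually_lt_atBot (0 : ℝ)).prod_mk (eventually_gt_atTop (0 : ℝ))]
    with p hp hab
  exact pos_of_mul_pos_right hp (by linarith [hab.1, hab.2])

lemma exists_lt_forall_of_eventually_atBot_prod_atTop {P : ℝ × ℝ → Prop}
    (h : ∀ᶠ p in atBot ×ˢ atTop, P p) :
    ∃ a' b' : ℝ, a' < b' ∧ ∀ a < a', ∀ b > b', P (a, b) := by
  obtain ⟨pa, hpa, pb, hpb, hP⟩ := eventually_prod_iff.1 h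
  obtain ⟨a₀, ha₀⟩ := eventually_atBot.1 hpa
  obtain ⟨b₀, hb₀⟩ := eventually_atTop.1 hpb
  refine ⟨min a₀ (b₀ - 1), b₀, by linarith [min_le_right a₀ (b₀ - 1)], fun a ha b hb => ?_⟩
  exact hP (ha₀ a (by linarith [min_le_left a₀ (b₀ - 1)])) (hb₀ b hb.le)

section

variable {S Ω : Type*} [MeasurableSpace Ω] {ℙ : Measure Ω} [IsProbabilityMeasure ℙ]
  {H : S → Ω → ℝ} {x x' : S}

lemma abs_mul_srP_sub_le (hmeas : Measurable (H x))
    (hL2 : Integrable (fun ω => H x ω ^ 2) ℙ) {a b : ℝ} (ha : a < 0) (hb : 0 < b) :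
    |(b - a) * srP ℙ H x a b - (b - srF ℙ H x)| ≤
      (∫ ω, H x ω ^ 2 ∂ℙ) / b + (∫ ω, H x ω ^ 2 ∂ℙ) / -a := by
  have hH : Integrable (H x) ℙ :=
    ((memLp_two_iff_integrable_sq hmeas.aestronglyMeasurable).2 hL2).integrable one_le_two
  have hclamp : Integrable (fun ω => min (max ((b - H x ω) / (b - a)) 0) 1) ℙ := by
    refine Integrable.of_bound (C := 1) ?_ (ae_of_all _ fun ω => ?_)
    · exact ((((measurable_const.sub hmeas).div_const _).max measurable_const).min
        measurable_const).aestronglyMeasurable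
    · rw [Real.norm_eq_abs, abs_of_nonneg (le_min (le_max_right _ _) zero_le_one)]
      exact min_le_right _ _
  have hlin : Integrable (fun ω => b - H x ω) ℙ := (integrable_const b).sub hH
  have hsq : Integrable (fun ω => H x ω ^ 2 / b + H x ω ^ 2 / -a) ℙ :=
    (hL2.div_const _).add (hL2.div_const _)
  have hdiff : (b - a) * srP ℙ H x a b - (b - srF ℙ H x) =
      ∫ ω, ((b - a) * min (max ((b - H x ω) / (b - a)) 0) 1 - (b - H x ω)) ∂ℙ := by
    rw [integral_sub (hclamp.const_mul _) hlin, integral_const_mul,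
      integral_sub (integrable_const b) hH, integral_const]
    simp [srP, srF]
  calc |(b - a) * srP ℙ H x a b - (b - srF ℙ H x)|
      ≤ ∫ ω, (H x ω ^ 2 / b + H x ω ^ 2 / -a) ∂ℙ := by
        rw [hdiff, ← Real.norm_eq_abs]
        refine norm_integral_le_of_norm_le hsq (ae_of_all _ fun ω => ?_)
        exact abs_mul_clamp_sub_le ha hb
    _ = (∫ ω, H x ω ^ 2 ∂ℙ) / b + (∫ ω, H x ω ^ 2 ∂ℙ) / -a := by
        rw [integral_add (hL2.div_const _) (hL2.div_const _), integral_div, integral_div]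

lemma tendsto_mul_srP_sub (hmeas : Measurable (H x))
    (hL2 : Integrable (fun ω => H x ω ^ 2) ℙ) :
    Tendsto (fun p : ℝ × ℝ => (p.2 - p.1) * srP ℙ H x p.1 p.2 - (p.2 - srF ℙ H x))
      (atBot ×ˢ atTop) (𝓝 0) := by
  set m := ∫ ω, H x ω ^ 2 ∂ℙ
  have hbound : ∀ᶠ p : ℝ × ℝ in atBot ×ˢ atTop,
      ‖(p.2 - p.1) * srP ℙ H x p.1 p.2 - (p.2 - srF ℙ H x)‖ ≤ m / p.2 + m / -p.1 :=
    ((eventually_lt_atBot (0 : ℝ)).prod_mk (eventually_gt_atTop (0 : ℝ))).mono fun p hp =>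
      abs_mul_srP_sub_le hmeas hL2 hp.1 hp.2
  refine squeeze_zero_norm' hbound ?_
  have hb : Tendsto (fun p : ℝ × ℝ => p.2) (atBot ×ˢ atTop) atTop := tendsto_snd
  have ha : Tendsto (fun p : ℝ × ℝ => -p.1) (atBot ×ˢ atTop) atTop :=
    tendsto_neg_atBot_atTop.comp tendsto_fst
  simpa using (tendsto_const_nhds.div_atTop hb).add (tendsto_const_nhds.div_atTop ha)

lemma eventually_srP_lt_srP (hmeas : Measurable (H x))
    (hL2 : Integrable (fun ω => H x ω ^ 2) ℙ) (hmeas' : Measurable (H x'))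
    (hL2' : Integrable (fun ω => H x' ω ^ 2) ℙ)
    (hlt : srF ℙ H x < srF ℙ H x') :
    ∀ᶠ p : ℝ × ℝ in atBot ×ˢ atTop, srP ℙ H x' p.1 p.2 < srP ℙ H x p.1 p.2 := by
  have hgap : Tendsto (fun p : ℝ × ℝ => (p.2 - p.1) * (srP ℙ H x p.1 p.2 - srP ℙ H x' p.1 p.2))
      (atBot ×ˢ atTop) (𝓝 (srF ℙ H x' - srF ℙ H x)) := by
    convert ((tendsto_mul_srP_sub hmeas hL2).sub (tendsto_mul_srP_sub hmeas' hL2')).add_const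
      (srF ℙ H x' - srF ℙ H x) using 1
    · ext p; ring
    · simp
  filter_upwards [eventually_pos_of_eventually_pos_mul_sub
    (hgap.eventually_const_lt (sub_pos.2 hlt))] with p hp
  exact sub_pos.1 hp

lemma eventually_srP_pos (hmeas : Measurable (H x))
    (hL2 : Integrable (fun ω => H x ω ^ 2) ℙ) :
    ∀ᶠ p : ℝ × ℝ in atBot ×ˢ atTop, 0 < srP ℙ H x p.1 p.2 := by
  have hb : Tendsto (fun p : ℝ × ℝ => p.2 - srF ℙ H x) (atBot ×ˢ atTop) atTop :=
    tendsto_atTop_add_const_right _ _ tendsto_snd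
  have h : Tendsto (fun p : ℝ × ℝ => (p.2 - p.1) * srP ℙ H x p.1 p.2) (atBot ×ˢ atTop) atTop := by
    simpa using (tendsto_mul_srP_sub hmeas hL2).add_atTop hb
  exact eventually_pos_of_eventually_pos_mul_sub (h.eventually_gt_atTop 0)

lemma eventually_srP_lt_one (hmeas : Measurable (H x))
    (hL2 : Integrable (fun ω => H x ω ^ 2) ℙ) :
    ∀ᶠ p : ℝ × ℝ in atBot ×ˢ atTop, srP ℙ H x p.1 p.2 < 1 := by
  have ha : Tendsto (fun p : ℝ × ℝ => srF ℙ H x - p.1) (atBot ×ˢ atTop) atTop :=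
    tendsto_atTop_add_const_left _ _ (tendsto_neg_atBot_atTop.comp tendsto_fst)
  have h : Tendsto (fun p : ℝ × ℝ => (p.2 - p.1) * (1 - srP ℙ H x p.1 p.2))
      (atBot ×ˢ atTop) atTop := by
    convert ha.atTop_add (tendsto_mul_srP_sub hmeas hL2).neg using 1
    ext p; ring
  filter_upwards [eventually_pos_of_eventually_pos_mul_sub (h.eventually_gt_atTop 0)] with p hp
  exact sub_pos.1 hp

end

/-- Theorem 3.1 of Yan and Mukai (1992): there exist `a' < b'` such that for all
`a < a'` and `b > b'`, the ruler probability `P(·,a,b)` reverses the order of `f`,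
lies strictly between `0` and `1`, and its set of maximizers `S*(a,b)` is a nonempty
subset of the set `S*` of global minimizers of `f`. -/
theorem stochastic_ruler_correspondence
    {S : Type*} [Fintype S] [Nonempty S]
    {Ω : Type*} [MeasurableSpace Ω] (ℙ : Measure Ω) [IsProbabilityMeasure ℙ]
    (H : S → Ω → ℝ) (hmeas : ∀ x, Measurable (H x))
    (hL2 : ∀ x, Integrable (fun ω => (H x ω) ^ 2) ℙ) :
    ∃ a' b' : ℝ, a' < b' ∧ ∀ a < a', ∀ b > b',
      (∀ x x' : S, srF ℙ H x < srF ℙ H x' → srP ℙ H x' a b < srP ℙ H x a b) ∧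
      (∀ x : S, 0 < srP ℙ H x a b ∧ srP ℙ H x a b < 1) ∧
      ({x : S | ∀ x' : S, srP ℙ H x' a b ≤ srP ℙ H x a b}.Nonempty ∧
        {x : S | ∀ x' : S, srP ℙ H x' a b ≤ srP ℙ H x a b} ⊆
          {x : S | ∀ x' : S, srF ℙ H x ≤ srF ℙ H x'}) := by
  have hev : ∀ᶠ p : ℝ × ℝ in atBot ×ˢ atTop,
      (∀ x x' : S, srF ℙ H x < srF ℙ H x' → srP ℙ H x' p.1 p.2 < srP ℙ H x p.1 p.2) ∧
        ∀ x : S, 0 < srP ℙ H x p.1 p.2 ∧ srP ℙ H x p.1 p.2 < 1 := by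
    simp only [eventually_and, eventually_all]
    exact ⟨fun x x' hlt => eventually_srP_lt_srP (hmeas x) (hL2 x) (hmeas x') (hL2 x') hlt,
      fun x => ⟨eventually_srP_pos (hmeas x) (hL2 x), eventually_srP_lt_one (hmeas x) (hL2 x)⟩⟩
  obtain ⟨a', b', hab, h⟩ := exists_lt_forall_of_eventually_atBot_prod_atTop hev
  refine ⟨a', b', hab, fun a ha b hb => ?_⟩
  obtain ⟨hanti, hbounds⟩ := h a ha b hb
  refine ⟨hanti, hbounds, Finite.exists_max (srP ℙ H · a b), fun x hx x' => ?_⟩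
  by_contra hlt
  exact (hanti x' x (not_le.1 hlt)).not_ge (hx x')
end

section
/- The vector π(M) with components π_x(M) = p(x)^M / Σ_{x' ∈ S} p(x')^M is a stationary probability distribution for the Markov transition kernel K of the original stochastic ruler method; that is, Σ_{x ∈ S} π_x(M) = 1 and Σ_{x ∈ S} π_x(M) · K(x, x') = π_{x'}(M) for every x' ∈ S. -/
open Finset

/-- The vector `π(M)` with components `π_x(M) = p(x)^M / Σ_{x'} p(x')^M` is a
stationary probability distribution for the transition kernel `K` of the original
stochastic ruler method with constant test number `M`. -/
theorem stochastic_ruler_stationary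
    {S : Type*} [Fintype S] [Nonempty S] [DecidableEq S]
    (R : S → S → ℝ)
    (hRnonneg : ∀ x x', 0 ≤ R x x')
    (hRsymm : ∀ x x', R x x' = R x' x)
    (hRdiag : ∀ x, R x x = 0)
    (hRsum : ∀ x, ∑ x', R x x' = 1)
    (p : S → ℝ) (hp : ∀ x, 0 < p x ∧ p x ≤ 1)
    (M : ℕ) (hM : 0 < M)
    (K : S → S → ℝ)
    (hKoff : ∀ x x', x' ≠ x → K x x' = R x x' * p x' ^ M)
    (hKdiag : ∀ x, K x x = 1 - ∑ y ∈ univ.erase x, R x y * p y ^ M)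
    (π : S → ℝ) (hπ : ∀ x, π x = p x ^ M / ∑ x', p x' ^ M) :
    (∑ x, π x = 1) ∧ (∀ x', ∑ x, π x * K x x' = π x') := by
  set Z : ℝ := ∑ x', p x' ^ M with hZ
  have hZpos : 0 < Z := Finset.sum_pos (fun x _ => pow_pos (hp x).1 M) univ_nonempty
  constructor
  · have : ∑ x, π x = (∑ x, p x ^ M) / Z := by
      simp only [hπ, ← hZ]
      rw [Finset.sum_div]
    rw [this, ← hZ, div_self hZpos.ne']
  · intro x'
    have key : ∑ x, p x ^ M * K x x' = p x' ^ M := by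
      rw [← Finset.sum_erase_add _ _ (mem_univ x'), hKdiag x']
      have h1 : ∑ x ∈ univ.erase x', p x ^ M * K x x'
          = p x' ^ M * ∑ x ∈ univ.erase x', R x' x * p x ^ M := by
        rw [Finset.mul_sum]
        refine Finset.sum_congr rfl fun x hx => ?_
        have hne : x' ≠ x := (Finset.ne_of_mem_erase hx).symm
        rw [hKoff x x' hne, hRsymm]
        ring
      rw [h1]
      ring
    have : ∑ x, π x * K x x' = (∑ x, p x ^ M * K x x') / Z := by
      simp only [hπ, ← hZ]
      rw [Finset.sum_div]
      exact Finset.sum_congr rfl fun x _ => by ring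
    rw [this, key, hπ x', hZ]
end

section
/- The vector π_r(M) with components π_{x(r)}(M) = g_{M,n}(p(x)) / Σ_{x' ∈ S} g_{M,n}(p(x')) is a stationary probability distribution for the Markov transition kernel K_r of the relaxed stochastic ruler method; that is, Σ_{x ∈ S} π_{x(r)}(M) = 1 and Σ_{x ∈ S} π_{x(r)}(M) · K_r(x, x') = π_{x'(r)}(M) for every x' ∈ S. -/
open Finset

/-!
`πr` is proportional to `g = relaxedAccept M n ∘ p`, and off the diagonal `Kr x x' = R x x' · g x'`
with `R` symmetric, so `πr x · Kr x x' = g x · R x x' · g x' / Z`, `Z = Σ g`, is symmetric in `x, x'`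
(detailed balance). Summing over `x` and using that the rows of `Kr` sum to `1` gives
stationarity. The normalisation needs `Z > 0`: since `n = ⌈αM⌉ ≤ M`, the `t = n` term `q ^ n`
of `g` is present and positive.
-/

/-- Relaxed acceptance probability
`g_{M,n}(q) = Σ_{t=n}^{M} C(t−1, t−n) · q^n · (1−q)^{t−n}`. -/
noncomputable def relaxedAccept (M n : ℕ) (q : ℝ) : ℝ :=
  ∑ t ∈ Finset.Icc n M, ((t - 1).choose (t - n) : ℝ) * q ^ n * (1 - q) ^ (t - n)

lemma relaxedAccept_pos {M n : ℕ} (hnM : n ≤ M) {q : ℝ} (hq₀ : 0 < q) (hq₁ : q ≤ 1) :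
    0 < relaxedAccept M n q := by
  have h1q : 0 ≤ 1 - q := sub_nonneg.mpr hq₁
  refine sum_pos' (fun t _ => by positivity) ⟨n, mem_Icc.mpr ⟨le_rfl, hnM⟩, ?_⟩
  simpa using pow_pos hq₀ n

lemma ceil_mul_le_self {α : ℝ} (hα : α ≤ 1) (M : ℕ) : ⌈α * M⌉₊ ≤ M :=
  Nat.ceil_le.mpr (mul_le_of_le_one_left M.cast_nonneg hα)

section Stationarity

variable {S : Type*}

lemma sum_div_sum_self [Fintype S] {g : S → ℝ} (hg : ∑ x, g x ≠ 0) : ∑ x, g x / ∑ y, g y = 1 := by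
  rw [← sum_div, div_self hg]

lemma sum_eq_one_of_diag_eq_one_sub [Fintype S] [DecidableEq S] {K : S → S → ℝ} {x : S}
    (hdiag : K x x = 1 - ∑ y ∈ univ.erase x, K x y) : ∑ y, K x y = 1 := by
  rw [← add_sum_erase _ _ (mem_univ x), hdiag, sub_add_cancel]

lemma sum_mul_eq_of_detailed_balance [Fintype S] {π : S → ℝ} {K : S → S → ℝ}
    (hbal : ∀ x y, π x * K x y = π y * K y x) (hrow : ∀ x, ∑ y, K x y = 1) (y : S) :
    ∑ x, π x * K x y = π y := by
  simp_rw [hbal _ y, ← mul_sum, hrow, mul_one]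

lemma detailed_balance_of_symm {R K : S → S → ℝ} {g π : S → ℝ} {Z : ℝ}
    (hR : ∀ x y, R x y = R y x) (hK : ∀ x y, y ≠ x → K x y = R x y * g y)
    (hπ : ∀ x, π x = g x / Z) (x y : S) :
    π x * K x y = π y * K y x := by
  obtain rfl | hxy := eq_or_ne x y
  · rfl
  rw [hK x y hxy.symm, hK y x hxy, hπ, hπ, hR y x]
  ring

end Stationarity

theorem relaxed_stochastic_ruler_stationary_general
    {S : Type*} [Fintype S] [Nonempty S] [DecidableEq S]
    (R : S → S → ℝ)
    (hRsymm : ∀ x x', R x x' = R x' x)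
    (p : S → ℝ) (hp : ∀ x, 0 < p x ∧ p x < 1)
    (α : ℝ) (hα : 0 < α ∧ α < 1)
    (M : ℕ)
    (n : ℕ) (hn : n = ⌈α * M⌉₊)
    (Kr : S → S → ℝ)
    (hKoff : ∀ x x', x' ≠ x → Kr x x' = R x x' * relaxedAccept M n (p x'))
    (hKdiag : ∀ x, Kr x x = 1 - ∑ y ∈ univ.erase x, R x y * relaxedAccept M n (p y))
    (πr : S → ℝ)
    (hπr : ∀ x, πr x = relaxedAccept M n (p x) / ∑ x', relaxedAccept M n (p x')) :
    (∑ x, πr x = 1) ∧ (∀ x', ∑ x, πr x * Kr x x' = πr x') := by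
  have hnM : n ≤ M := hn ▸ ceil_mul_le_self hα.2.le M
  have hZ : ∑ x, relaxedAccept M n (p x) ≠ 0 :=
    (sum_pos (fun x _ => relaxedAccept_pos hnM (hp x).1 (hp x).2.le) univ_nonempty).ne'
  have hrow : ∀ x, ∑ y, Kr x y = 1 := fun x =>
    sum_eq_one_of_diag_eq_one_sub <| (hKdiag x).trans <| by
      rw [sum_congr rfl fun y hy => (hKoff x y (ne_of_mem_erase hy)).symm]
  refine ⟨by simpa only [hπr] using sum_div_sum_self hZ, ?_⟩
  exact sum_mul_eq_of_detailed_balance (detailed_balance_of_symm hRsymm hKoff hπr) hrow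

/-- The vector `π_r(M)` with components
`π_{x(r)}(M) = g_{M,n}(p(x)) / Σ_{x'} g_{M,n}(p(x'))`, `n = ⌈αM⌉`, is a stationary
probability distribution for the transition kernel `K_r` of the relaxed stochastic
ruler method. -/
theorem relaxed_stochastic_ruler_stationary
    {S : Type*} [Fintype S] [Nonempty S] [DecidableEq S]
    (R : S → S → ℝ)
    (hRnonneg : ∀ x x', 0 ≤ R x x')
    (hRsymm : ∀ x x', R x x' = R x' x)
    (hRdiag : ∀ x, R x x = 0)
    (hRsum : ∀ x, ∑ x', R x x' = 1)
    (p : S → ℝ) (hp : ∀ x, 0 < p x ∧ p x < 1)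
    (α : ℝ) (hα : 0 < α ∧ α < 1)
    (M : ℕ) (hM : 0 < M)
    (n : ℕ) (hn : n = ⌈α * M⌉₊)
    (Kr : S → S → ℝ)
    (hKoff : ∀ x x', x' ≠ x → Kr x x' = R x x' * relaxedAccept M n (p x'))
    (hKdiag : ∀ x, Kr x x = 1 - ∑ y ∈ univ.erase x, R x y * relaxedAccept M n (p y))
    (πr : S → ℝ)
    (hπr : ∀ x, πr x = relaxedAccept M n (p x) / ∑ x', relaxedAccept M n (p x')) :
    (∑ x, πr x = 1) ∧ (∀ x', ∑ x, πr x * Kr x x' = πr x') :=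
  relaxed_stochastic_ruler_stationary_general R hRsymm p hp α hα M n hn Kr hKoff hKdiag πr hπr
end

section
/- Let 0 ≤ p ≤ 1 and let n, M be integers with 1 ≤ n ≤ M. Under the product measure on {0,1}^M in which each of the M coordinates is an independent Bernoulli(p) random variable (value 1 with probability p), the probability that at least n coordinates equal 1 equals Σ_{t=n}^{M} C(t−1, n−1) · p^n · (1−p)^{t−n}. -/
/-!
The number of successes among the `M` trials is binomial, so the left-hand side is the binomial
tail `∑_{k ≥ n} C(M,k) p^k (1-p)^(M-k)`. The right-hand side sums, over `t ≤ M`, the probability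
that the `n`-th success occurs exactly at trial `t`. Both are `0` for `M < n`, and Pascal's rule
shows that passing from `M` to `M + 1` adds `C(M, n-1) p^n (1-p)^(M+1-n)` to each.
-/

open Finset MeasureTheory
open scoped NNReal ENNReal

set_option linter.deprecated false

section NegativeBinomial

variable {R : Type*} [CommRing R] (p : R)

theorem choose_succ_mul_pow_mul_one_sub_pow (M k : ℕ) :
    ((M + 1).choose (k + 1) : R) * p ^ (k + 1) * (1 - p) ^ (M - k) =
      p * (M.choose k * p ^ k * (1 - p) ^ (M - k)) +
        (1 - p) * (M.choose (k + 1) * p ^ (k + 1) * (1 - p) ^ (M - (k + 1))) := by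
  rw [Nat.choose_succ_succ', Nat.cast_add]
  rcases lt_or_ge k M with hk | hk
  · rw [show M - k = M - (k + 1) + 1 by omega]
    ring
  · -- `C(M, k+1) = 0` kills the term whose exponent `M - (k+1)` was truncated
    rw [Nat.choose_eq_zero_of_lt (by omega : M < k + 1)]
    ring

theorem sum_binomial_tail_succ {m M : ℕ} (hmM : m ≤ M) :
    ∑ k ∈ Icc (m + 1) (M + 1), ((M + 1).choose k : R) * p ^ k * (1 - p) ^ (M + 1 - k) =
      ∑ k ∈ Icc (m + 1) M, (M.choose k : R) * p ^ k * (1 - p) ^ (M - k) +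
        M.choose m * p ^ (m + 1) * (1 - p) ^ (M - m) := by
  set b : ℕ → R := fun k ↦ M.choose k * p ^ k * (1 - p) ^ (M - k)
  have hshift : ∑ k ∈ Icc (m + 1) (M + 1), ((M + 1).choose k : R) * p ^ k * (1 - p) ^ (M + 1 - k)
      = ∑ j ∈ Icc m M, (p * b j + (1 - p) * b (j + 1)) := by
    rw [← map_add_right_Icc m M 1, sum_map]
    exact sum_congr rfl fun j _ ↦ by
      simpa using choose_succ_mul_pow_mul_one_sub_pow p M j
  have htop : ∑ j ∈ Icc m M, b (j + 1) = ∑ k ∈ Icc (m + 1) M, b k := by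
    calc ∑ j ∈ Icc m M, b (j + 1) = ∑ k ∈ Icc (m + 1) (M + 1), b k := by
          rw [← map_add_right_Icc m M 1, sum_map]; rfl
      _ = ∑ k ∈ Icc (m + 1) M, b k := by
          rw [sum_Icc_succ_top (by omega), show b (M + 1) = 0 by simp [b], add_zero]
  rw [hshift, sum_add_distrib, ← mul_sum, ← mul_sum, htop,
    ← insert_Icc_add_one_left_eq_Icc hmM, sum_insert (by simp)]
  ring

theorem sum_binomial_tail_eq_sum_negBinomial (m M : ℕ) :
    ∑ k ∈ Icc (m + 1) M, (M.choose k : R) * p ^ k * (1 - p) ^ (M - k) =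
      ∑ t ∈ Icc (m + 1) M, ((t - 1).choose m : R) * p ^ (m + 1) * (1 - p) ^ (t - (m + 1)) := by
  rcases lt_or_ge M m with hM | hmM
  · simp [Icc_eq_empty_of_lt (by omega : M < m + 1)]
  induction M, hmM using Nat.le_induction with
  | base => simp
  | succ M hmM ih =>
    rw [sum_binomial_tail_succ p hmM, ih, sum_Icc_succ_top (by omega)]
    simp [Nat.add_sub_add_right]

end NegativeBinomial

section ProductBernoulli

variable {ι : Type*} [Fintype ι] (q : ℝ≥0) (hq : q ≤ 1)

theorem measure_pi_bernoulli_singleton (ω : ι → Bool) :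
    Measure.pi (fun _ : ι ↦ (PMF.bernoulli q hq).toMeasure) {ω} =
      ((q ^ #{i | ω i = true} * (1 - q) ^ #{i | ω i = false} : ℝ≥0) : ℝ≥0∞) := by
  simp only [Measure.pi_singleton, PMF.toMeasure_apply_singleton _ _ (measurableSet_singleton _),
    PMF.bernoulli_apply, ← ENNReal.coe_finset_prod]
  congr 1
  simp only [cond_eq_ite, prod_ite, prod_const, Bool.not_eq_true]

theorem card_filter_card_true_eq_choose [DecidableEq ι] (k : ℕ) :
    #{ω : ι → Bool | #{i | ω i = true} = k} = (Fintype.card ι).choose k := by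
  rw [← card_univ, ← card_powersetCard]
  refine card_nbij' (fun ω ↦ univ.filter (ω · = true)) (fun s i ↦ decide (i ∈ s)) ?_ ?_ ?_ ?_
  · intro ω; simp
  · intro s; simp +contextual
  · intro ω _; ext; simp
  · intro s _; ext; simp

theorem measure_pi_bernoulli_card_true_eq [DecidableEq ι] (k : ℕ) :
    Measure.pi (fun _ : ι ↦ (PMF.bernoulli q hq).toMeasure) {ω | #{i | ω i = true} = k} =
      (((Fintype.card ι).choose k * q ^ k * (1 - q) ^ (Fintype.card ι - k) : ℝ≥0) : ℝ≥0∞) := by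
  rw [← coe_filter_univ, ← sum_measure_singleton]
  have hfalse (ω : ι → Bool) :
      #{i | ω i = false} = Fintype.card ι - #{i | ω i = true} := by
    have := card_filter_add_card_filter_not (s := univ) (ω · = true)
    simp only [Bool.not_eq_true, card_univ] at this
    omega
  rw [sum_congr rfl fun ω hω ↦ by
    rw [measure_pi_bernoulli_singleton, hfalse, (mem_filter.mp hω).2], sum_const,
    card_filter_card_true_eq_choose, nsmul_eq_mul]
  push_cast
  ring

end ProductBernoulli

theorem bernoulli_at_least_n_successes_general
    (p : ℝ) (hp0 : 0 ≤ p) (hp1 : p ≤ 1)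
    (n M : ℕ) (hn : 1 ≤ n) :
    (Measure.pi (fun _ : Fin M =>
        (PMF.bernoulli (Real.toNNReal p) (Real.toNNReal_le_one.mpr hp1)).toMeasure))
      {ω : Fin M → Bool |
        n ≤ (Finset.univ.filter (fun i : Fin M => ω i = true)).card} =
      ENNReal.ofReal
        (∑ t ∈ Finset.Icc n M,
          ((t - 1).choose (n - 1) : ℝ) * p ^ n * (1 - p) ^ (t - n)) := by
  obtain ⟨m, rfl⟩ := Nat.exists_eq_add_of_le' hn
  have hq : p.toNNReal ≤ 1 := Real.toNNReal_le_one.mpr hp1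
  have hset : {ω : Fin M → Bool | m + 1 ≤ #{i | ω i = true}} =
      (fun ω ↦ #{i | ω i = true}) ⁻¹' ↑(Icc (m + 1) M) := by
    ext ω
    simpa using fun _ ↦ (card_filter_le _ _).trans_eq (card_fin M)
  rw [hset, ← sum_measure_preimage_singleton _ fun _ _ ↦ .of_discrete]
  simp only [Set.preimage, Set.mem_singleton_iff, measure_pi_bernoulli_card_true_eq,
    Fintype.card_fin]
  rw [add_tsub_cancel_right, ← sum_binomial_tail_eq_sum_negBinomial, ← ENNReal.coe_finset_sum,
    ← ENNReal.ofReal_coe_nnreal]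
  push_cast [NNReal.coe_sub hq, Real.coe_toNNReal _ hp0]
  rfl

/-- Under the product of `M` independent Bernoulli(`p`) measures on `{0,1}^M`
(coordinates valued in `Bool`, `true` with probability `p`), the probability that
at least `n` coordinates are `true` equals
`Σ_{t=n}^{M} C(t−1, n−1) · p^n · (1−p)^{t−n}`, the acceptance probability of the
relaxed stochastic ruler method. -/
theorem bernoulli_at_least_n_successes
    (p : ℝ) (hp0 : 0 ≤ p) (hp1 : p ≤ 1)
    (n M : ℕ) (hn : 1 ≤ n) (hnM : n ≤ M) :
    (Measure.pi (fun _ : Fin M =>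
        (PMF.bernoulli (Real.toNNReal p) (Real.toNNReal_le_one.mpr hp1)).toMeasure))
      {ω : Fin M → Bool |
        n ≤ (Finset.univ.filter (fun i : Fin M => ω i = true)).card} =
      ENNReal.ofReal
        (∑ t ∈ Finset.Icc n M,
          ((t - 1).choose (n - 1) : ℝ) * p ^ n * (1 - p) ^ (t - n)) :=
  bernoulli_at_least_n_successes_general p hp0 hp1 n M hn
end

section
/- For all integers 1 ≤ n ≤ M, the relaxed acceptance probability g_{M,n} is strictly increasing on [0,1]: if 0 ≤ q₁ < q₂ ≤ 1 then g_{M,n}(q₁) < g_{M,n}(q₂); consequently, if two candidate solutions satisfy P(x,a,b) > P(x',a,b), then the probability that the relaxed stochastic ruler method accepts x within M tests strictly exceeds the corresponding probability for x'. -/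
open Finset

/-!
`g_{M,n}` is the upper tail `P(Bin(M, q) ≥ n)`, and its derivative is the beta-type density
`n · C(M, n) · q^(n-1) · (1-q)^(M-n)`, which is positive on `(0, 1)`. The derivative formula is
proved by induction on the number `M - n` of allowed failures: passing from `M` to `M + 1` adds
one term, and the two Pascal-type identities `(m+1) C(N+1, m+1) = (N+1) C(N, m)` and
`(m+1) C(N, m+1) = (N-m) C(N, m)` make the new derivative telescope into the claimed one.
-/

theorem relaxedAccept_self (n : ℕ) : relaxedAccept n n = fun q => q ^ n := by
  funext q
  simp [relaxedAccept]

theorem relaxedAccept_succ {M n : ℕ} (h : n ≤ M + 1) (q : ℝ) :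
    relaxedAccept (M + 1) n q =
      relaxedAccept M n q + (M.choose (M + 1 - n) : ℝ) * q ^ n * (1 - q) ^ (M + 1 - n) := by
  rw [relaxedAccept, sum_Icc_succ_top h, Nat.add_sub_cancel]
  rfl

theorem hasDerivAt_relaxedAccept_add (m e : ℕ) (q : ℝ) :
    HasDerivAt (relaxedAccept (m + 1 + e) (m + 1))
      ((m + 1) * ((m + 1 + e).choose (m + 1) : ℝ) * q ^ m * (1 - q) ^ e) q := by
  induction e with
  | zero => simpa [relaxedAccept_self] using hasDerivAt_pow (m + 1) q
  | succ e ih =>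
    set N := m + 1 + e
    have hsplit : relaxedAccept (N + 1) (m + 1) = fun q =>
        relaxedAccept N (m + 1) q + (N.choose m : ℝ) * (q ^ (m + 1) * (1 - q) ^ (e + 1)) := by
      funext q
      rw [relaxedAccept_succ (by omega), show N + 1 - (m + 1) = e + 1 by omega,
        Nat.choose_symm_of_eq_add (show N = e + 1 + m by omega), mul_assoc]
    have hterm : HasDerivAt (fun q => (N.choose m : ℝ) * (q ^ (m + 1) * (1 - q) ^ (e + 1)))
        ((N.choose m : ℝ) *
          ((m + 1) * q ^ m * (1 - q) ^ (e + 1) - (e + 1) * q ^ (m + 1) * (1 - q) ^ e)) q := by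
      have := ((hasDerivAt_pow (m + 1) q).fun_mul
        (((hasDerivAt_id q).const_sub 1).fun_pow (e + 1))).const_mul (N.choose m : ℝ)
      refine this.congr_deriv ?_
      simp only [id, Nat.add_sub_cancel]
      push_cast
      ring
    have hpascal : ((m : ℝ) + 1) * ((N + 1).choose (m + 1) : ℝ) = (N + 1) * N.choose m := by
      exact_mod_cast (mul_comm _ _).trans (Nat.add_one_mul_choose_eq N m).symm
    have hpascal' : ((m : ℝ) + 1) * (N.choose (m + 1) : ℝ) = (e + 1) * N.choose m := by
      have h := Nat.choose_succ_right_eq N m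
      rw [show N - m = e + 1 by omega] at h
      rw [mul_comm]
      exact_mod_cast h.trans (mul_comm _ _)
    rw [show m + 1 + (e + 1) = N + 1 by omega, hsplit]
    refine (ih.add hterm).congr_deriv ?_
    have hN : (N : ℝ) = m + 1 + e := by simp [N]
    linear_combination
      q ^ m * (1 - q) ^ e * (hpascal' - (1 - q) * hpascal - (1 - q) * N.choose m * hN)

theorem hasDerivAt_relaxedAccept {M n : ℕ} (hn : 1 ≤ n) (hnM : n ≤ M) (q : ℝ) :
    HasDerivAt (relaxedAccept M n)
      (n * (M.choose n : ℝ) * q ^ (n - 1) * (1 - q) ^ (M - n)) q := by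
  obtain ⟨m, rfl⟩ := Nat.exists_eq_add_of_le' hn
  obtain ⟨e, rfl⟩ := Nat.exists_eq_add_of_le hnM
  simpa using hasDerivAt_relaxedAccept_add m e q

theorem strictMonoOn_relaxedAccept {M n : ℕ} (hn : 1 ≤ n) (hnM : n ≤ M) :
    StrictMonoOn (relaxedAccept M n) (Set.Icc 0 1) := by
  refine strictMonoOn_of_hasDerivWithinAt_pos (convex_Icc 0 1)
    (fun q _ => (hasDerivAt_relaxedAccept hn hnM q).continuousAt.continuousWithinAt)
    (fun q _ => (hasDerivAt_relaxedAccept hn hnM q).hasDerivWithinAt) fun q hq => ?_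
  rw [interior_Icc] at hq
  have hchoose : 0 < (M.choose n : ℝ) := by exact_mod_cast Nat.choose_pos hnM
  have hq' : 0 < 1 - q := sub_pos.2 hq.2
  have hq0 : 0 < q := hq.1
  positivity

/-- For all integers `1 ≤ n ≤ M`, the relaxed acceptance probability `g_{M,n}` is
strictly increasing on `[0,1]`; consequently, if two candidate solutions have
per-test success probabilities `P(x,a,b) > P(x',a,b)` (both in `[0,1]`), then the
probability that the relaxed stochastic ruler method accepts `x` within `M` tests
strictly exceeds the corresponding probability for `x'`. -/
theorem relaxedAccept_strictMonoOn
    (n M : ℕ) (hn : 1 ≤ n) (hnM : n ≤ M) :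
    (∀ q₁ q₂ : ℝ, 0 ≤ q₁ → q₁ < q₂ → q₂ ≤ 1 →
      relaxedAccept M n q₁ < relaxedAccept M n q₂) ∧
    (∀ Px Px' : ℝ, 0 ≤ Px' → Px' < Px → Px ≤ 1 →
      relaxedAccept M n Px' < relaxedAccept M n Px) := by
  have hmono := strictMonoOn_relaxedAccept hn hnM
  have key : ∀ a b : ℝ, 0 ≤ a → a < b → b ≤ 1 →
      relaxedAccept M n a < relaxedAccept M n b :=
    fun a b ha hab hb => hmono ⟨ha, (hab.trans_le hb).le⟩ ⟨ha.trans hab.le, hb⟩ hab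
  exact ⟨key, fun Px Px' => key Px' Px⟩
end
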